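/- arXiv:1605.00495 — 8 statements merged into one kernel-verified Lean document; each statement's English description precedes it below -/
import Mathlib

section
/- Generalised attack monotonicity 1: Let S₁ ⊆ 𝒮 be finite and coherent and s ∈ 𝒮 be such that R(S₁,s) is defined. If S₂ ⊆ 𝒮 is finite and coherent, the set of identifiers occurring in S₂ equals the set of identifiers occurring in S₁, and for every (a,n) ∈ S₁ there exists (a,m) ∈ S₂ with n ≤ m, then R(S₂,s) is defined. -/
namespace CoalitionArg

/-- An argument: identifier paired with capacity. -/
abbrev Arg (A : Type*) := A × ℕ

variable {A : Type*}

/-- A coherent set of arguments: finite, positive capacities, and each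
identifier occurs with at most one capacity. -/
def Coherent (S : Set (Arg A)) : Prop :=
  S.Finite ∧ (∀ p ∈ S, 0 < p.2) ∧ ∀ p ∈ S, ∀ q ∈ S, p.1 = q.1 → p.2 = q.2

/-- Attack-strength functions are modelled as `Option ℕ`-valued functions;
`none` means undefined. -/
abbrev AttFun (A : Type*) := Set (Arg A) → Arg A → Option ℕ

/-- `R` is defined at `(T, s)`. -/
def RDef (R : AttFun A) (T : Set (Arg A)) (s : Arg A) : Prop := (R T s).isSome

/-- The eight axioms of an attack-strength function. -/
structure IsAttackStrength (R : AttFun A) : Prop where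
  empty_undef : ∀ s, R ∅ s = none
  subset_def : ∀ S₁ S₂ s, RDef R S₁ s → S₂ ⊆ S₁ → S₂.Nonempty → RDef R S₂ s
  union_def : ∀ S₁ S₂ s, RDef R S₁ s → RDef R S₂ s → RDef R (S₁ ∪ S₂) s
  pos : ∀ S₁ s n, R S₁ s = some n → 0 < n
  mono_source_cap : ∀ S₁ s a n m k, R S₁ s = some k → (a, n) ∈ S₁ → n ≤ m →
      ∃ k', R ((S₁ \ {(a, n)}) ∪ {(a, m)}) s = some k' ∧ k ≤ k'
  mono_source_inter : ∀ S₁ S₂ s k₁ k₂ k, R S₁ s = some k₁ → R S₂ s = some k₂ →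
      R (S₁ ∩ S₂) s = some k → k ≤ k₁ ∧ k ≤ k₂
  mono_target : ∀ S₁ a n m k, R S₁ (a, n) = some k → (∀ p ∈ S₁, p.1 ≠ a) → n ≤ m →
      ∃ k', R S₁ (a, m) = some k' ∧ k ≤ k'
  no_self : ∀ S₁ s, s ∈ S₁ → R S₁ s = none

/-- Attack-strength axioms without (2) quasi-closure by subsets and
(3) closure by union (for the restricted framework). -/
structure IsAttackStrengthRestr (R : AttFun A) : Prop where
  empty_undef : ∀ s, R ∅ s = none
  pos : ∀ S₁ s n, R S₁ s = some n → 0 < n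
  mono_source_cap : ∀ S₁ s a n m k, R S₁ s = some k → (a, n) ∈ S₁ → n ≤ m →
      ∃ k', R ((S₁ \ {(a, n)}) ∪ {(a, m)}) s = some k' ∧ k ≤ k'
  mono_source_inter : ∀ S₁ S₂ s k₁ k₂ k, R S₁ s = some k₁ → R S₂ s = some k₂ →
      R (S₁ ∩ S₂) s = some k → k ≤ k₁ ∧ k ≤ k₂
  mono_target : ∀ S₁ a n m k, R S₁ (a, n) = some k → (∀ p ∈ S₁, p.1 ≠ a) → n ≤ m →
      ∃ k', R S₁ (a, m) = some k' ∧ k ≤ k'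
  no_self : ∀ S₁ s, s ∈ S₁ → R S₁ s = none

/-- An argumentation framework: a coherent set together with an
attack-strength function. -/
structure AF (A : Type*) where
  args : Set (Arg A)
  att : AttFun A
  coherent : Coherent args
  isAtt : IsAttackStrength att

/-- `S₁` attacks `s`. -/
def Attacks (R : AttFun A) (S₁ : Set (Arg A)) (s : Arg A) : Prop :=
  ∃ S₂ ⊆ S₁, RDef R S₂ s

/-- `S₁` defeats `s`: it attacks `s`, and the maximum attack strength over
subsets of `S₁` reaches the capacity of `s`. -/
def Defeats (R : AttFun A) (S₁ : Set (Arg A)) (s : Arg A) : Prop :=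
  Attacks R S₁ s ∧ ∃ S₂ ⊆ S₁, ∃ n, R S₂ s = some n ∧
    (∀ Sx ⊆ S₁, ∀ m, R Sx s = some m → m ≤ n) ∧ s.2 ≤ n

/-- Maximum attack strength of `S₁` on `s` (0 when `S₁` does not attack `s`). -/
noncomputable def Vmax (R : AttFun A) (S₁ : Set (Arg A)) (s : Arg A) : ℕ :=
  sSup {n | ∃ S₂ ⊆ S₁, R S₂ s = some n}

/-- Conflict-eliminability: no member is defeated by the set itself.
(`α` is defined exactly on conflict-eliminable sets.) -/
def ConfElim (R : AttFun A) (S₁ : Set (Arg A)) : Prop := ∀ s ∈ S₁, ¬ Defeats R S₁ s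

/-- The intrinsic arguments of `S₁`. -/
noncomputable def alpha (R : AttFun A) (S₁ : Set (Arg A)) : Set (Arg A) :=
  (fun s => (s.1, s.2 - Vmax R S₁ s)) '' S₁

/-- The attacks occurring inside `S₁`. -/
def Del (R : AttFun A) (S₁ : Set (Arg A)) : Set (Set (Arg A) × Arg A) :=
  {p | p.2 ∈ S₁ ∧ p.1 ⊆ S₁ ∧ RDef R p.1 p.2}

open Classical in
/-- The attack-strength function of the view of `S₁`: `R` restricted off
`Del R S₁`. -/
noncomputable def viewAtt (R : AttFun A) (S₁ : Set (Arg A)) : AttFun A :=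
  fun T s => if (T, s) ∈ Del R S₁ then none else R T s

/-- The argument set of the view of `S₁` about `S`. -/
noncomputable def viewArgs (R : AttFun A) (S S₁ : Set (Arg A)) : Set (Arg A) :=
  (S \ S₁) ∪ alpha R S₁

/-- `S₁` c-attacks `s`. -/
def CAttacks (R : AttFun A) (S₁ : Set (Arg A)) (s : Arg A) : Prop :=
  ConfElim R S₁ ∧ ∃ S₂ ⊆ alpha R S₁, RDef (viewAtt R S₁) S₂ s

/-- `S₁` c-defeats `s`. -/
def CDefeats (R : AttFun A) (S₁ : Set (Arg A)) (s : Arg A) : Prop :=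
  CAttacks R S₁ s ∧ ∃ S₃ ⊆ alpha R S₁, ∃ n, viewAtt R S₁ S₃ s = some n ∧ s.2 ≤ n

/-- c-admissibility of `S₁ ⊆ S`. -/
def CAdmissible (R : AttFun A) (S S₁ : Set (Arg A)) : Prop :=
  ConfElim R S₁ ∧
  ∀ S₂ ⊆ viewArgs R S S₁, ∀ s ∈ S₁, Attacks R S₂ s →
    ∀ Sx ⊆ S₂, RDef R Sx s → ∃ sx ∈ Sx, CDefeats R S₁ sx

/-- c-preferredness of `S₁ ⊆ S`. -/
def CPreferred (R : AttFun A) (S S₁ : Set (Arg A)) : Prop :=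
  CAdmissible R S S₁ ∧ ¬ ∃ Sy, S₁ ⊂ Sy ∧ Sy ⊆ S ∧ CAdmissible R S Sy

/-- `S₁` is one-directionally attacked. -/
def OneDirAttacked (R : AttFun A) (S S₁ : Set (Arg A)) : Prop :=
  ConfElim R S₁ ∧ ∃ Sx ⊆ viewArgs R S S₁, (∃ s ∈ S₁, Attacks R Sx s) ∧
    ∀ sx ∈ Sx, ¬ CAttacks R S₁ sx

/-- The states relation `S₁ ≼ S₂`. -/
def StateLeq (R : AttFun A) (S S₁ S₂ : Set (Arg A)) : Prop :=
  ConfElim R S₁ ∧ ConfElim R S₂ ∧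
  (CAdmissible R S S₂ ∨ OneDirAttacked R S S₁ ∨
    (¬ CAdmissible R S S₁ ∧ ¬ CAdmissible R S S₂ ∧
     ¬ OneDirAttacked R S S₁ ∧ ¬ OneDirAttacked R S S₂))

/-- Coalition permission. -/
def CoalitionPermitted (R : AttFun A) (S₁ S₂ : Set (Arg A)) : Prop :=
  S₁ ∩ S₂ = ∅ ∧ ConfElim R (S₁ ∪ S₂)

/-- The attackers of `S₁` within `S`. -/
def Attacker (R : AttFun A) (S S₁ : Set (Arg A)) : Set (Arg A) :=
  {s ∈ S | ∃ s₁ ∈ S₁, Attacks R {s} s₁}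

/-- Attackers of `S₁` that `Sx` neither c-defeats nor contains. -/
def UndefAtt (R : AttFun A) (S S₁ Sx : Set (Arg A)) : Set (Arg A) :=
  {s ∈ Attacker R S S₁ | ¬ CDefeats R Sx s ∧ s ∉ Sx}

/-- The (fewer attackers) axiom for the pair `(S₁, S₂)`. -/
noncomputable def FewerAttackers (R : AttFun A) (S S₁ S₂ : Set (Arg A)) : Prop :=
  (UndefAtt R S S₁ S₂).ncard ≤ (UndefAtt R S S₁ S₁).ncard

/-- Coalition profitability `S₁ ⊴ S₂`. -/
noncomputable def Profitable (R : AttFun A) (S S₁ S₂ : Set (Arg A)) : Prop :=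
  S₁ ⊆ S₂ ∧ StateLeq R S S₁ S₂ ∧ FewerAttackers R S S₁ S₂

/-- `Max(S₁)`: maximal profitable extensions of `S₁` within `S`. -/
noncomputable def MaxSet (R : AttFun A) (S S₁ : Set (Arg A)) : Set (Set (Arg A)) :=
  {Sx | Sx ⊆ S ∧ Profitable R S S₁ Sx ∧
    ∀ Sy, Sx ⊂ Sy → Sy ⊆ S → ¬ Profitable R S S₁ Sy}

open Classical in
/-- State rank: 2 for c-admissible, 0 for one-directionally attacked, 1 otherwise. -/
noncomputable def stateRank (R : AttFun A) (S S₁ : Set (Arg A)) : ℕ :=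
  if CAdmissible R S S₁ then 2 else if OneDirAttacked R S S₁ then 0 else 1

/-- Number of external undefeated attackers of `Sx`. -/
noncomputable def extAttCount (R : AttFun A) (S Sx : Set (Arg A)) : ℕ :=
  (UndefAtt R S Sx Sx).ncard

/-- The three comparison criteria: set size, state, external attackers. -/
inductive Crit | l | b | f

/-- `≤_β` for `β ∈ {l, b, f}`. -/
noncomputable def critLe (R : AttFun A) (S : Set (Arg A)) :
    Crit → Set (Arg A) → Set (Arg A) → Prop
  | .l, S₁, S₂ => S₁.ncard ≤ S₂.ncard
  | .b, S₁, S₂ => stateRank R S S₁ ≤ stateRank R S S₂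
  | .f, S₁, S₂ => extAttCount R S S₂ ≤ extAttCount R S S₁

/-- `<_β`. -/
noncomputable def critLt (R : AttFun A) (S : Set (Arg A))
    (c : Crit) (S₁ S₂ : Set (Arg A)) : Prop :=
  critLe R S c S₁ S₂ ∧ ¬ critLe R S c S₂ S₁

/-- Maximal profitability `S₁ ⊴_m S₂`. -/
noncomputable def ProfitableM (R : AttFun A) (S S₁ S₂ : Set (Arg A)) : Prop :=
  Profitable R S S₁ S₂ ∧ ∃ Sx ∈ MaxSet R S S₂, ∀ Sy ∈ MaxSet R S S₁,
    ∀ β : Crit, critLt R S β Sx Sy → ∃ γ : Crit, γ ≠ β ∧ critLt R S γ Sy Sx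

/-- The coalition formability semantics `W`. -/
noncomputable def Wsem (R : AttFun A) (S S₁ : Set (Arg A)) : Set (Set (Arg A)) :=
  {S₂ | S₂ ⊆ S ∧ (Profitable R S S₁ (S₁ ∪ S₂) ∨ Profitable R S S₂ (S₁ ∪ S₂))}

/-- The coalition formability semantics `M`. -/
noncomputable def Msem (R : AttFun A) (S S₁ : Set (Arg A)) : Set (Set (Arg A)) :=
  {S₂ | S₂ ⊆ S ∧ Profitable R S S₁ (S₁ ∪ S₂) ∧ Profitable R S S₂ (S₁ ∪ S₂)}

/-- The coalition formability semantics `WS`. -/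
noncomputable def WSsem (R : AttFun A) (S S₁ : Set (Arg A)) : Set (Set (Arg A)) :=
  {S₂ | S₂ ⊆ S ∧ (ProfitableM R S S₁ (S₁ ∪ S₂) ∨ ProfitableM R S S₂ (S₁ ∪ S₂))}

/-- The coalition formability semantics `S`. -/
noncomputable def Ssem (R : AttFun A) (S S₁ : Set (Arg A)) : Set (Set (Arg A)) :=
  {S₂ | S₂ ⊆ S ∧ ProfitableM R S S₁ (S₁ ∪ S₂) ∧ ProfitableM R S S₂ (S₁ ∪ S₂)}

/-- Weak continuity of `⊴` for `S₁`. -/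
noncomputable def WeaklyContinuous (R : AttFun A) (S S₁ : Set (Arg A)) : Prop :=
  ∃ Sz ∈ MaxSet R S S₁, ∀ Sw ⊆ Sz,
    CoalitionPermitted R S₁ (Sw \ S₁) → Profitable R S S₁ Sw

/-! Nielsen–Parsons argumentation frameworks. -/

/-- `A₁` NP-attacks `a` in the NP framework with attack relation `G`. -/
def NPattacks (G : Set (Set (Arg A) × Arg A)) (A₁ : Set (Arg A)) (a : Arg A) : Prop :=
  ∃ A' ⊆ A₁, (A', a) ∈ G

/-- `(Ax, a) ∈ G` is minimal. -/
def NPminimal (G : Set (Set (Arg A) × Arg A)) (Ax : Set (Arg A)) (a : Arg A) : Prop :=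
  (Ax, a) ∈ G ∧ ∀ A'', A'' ⊂ Ax → (A'', a) ∉ G

/-- NP-conflict-freeness. -/
def NPconflictFree (G : Set (Set (Arg A) × Arg A)) (A₁ : Set (Arg A)) : Prop :=
  ∀ a ∈ A₁, ¬ NPattacks G A₁ a

/-- `A₁` NP-defends `a` within `S`. -/
def NPdefends (G : Set (Set (Arg A) × Arg A)) (S A₁ : Set (Arg A)) (a : Arg A) : Prop :=
  ∀ Ax ⊆ S, NPminimal G Ax a → ∃ ax ∈ Ax, NPattacks G A₁ ax

/-- NP-admissibility. -/
def NPadmissible (G : Set (Set (Arg A) × Arg A)) (S A₁ : Set (Arg A)) : Prop :=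
  A₁ ⊆ S ∧ NPconflictFree G A₁ ∧ ∀ a ∈ A₁, NPdefends G S A₁ a

/-- NP-preferredness. -/
def NPpreferred (G : Set (Set (Arg A) × Arg A)) (S A₁ : Set (Arg A)) : Prop :=
  NPadmissible G S A₁ ∧ ¬ ∃ A₂, A₁ ⊂ A₂ ∧ A₂ ⊆ S ∧ NPadmissible G S A₂

/-- `(S, G)` is a Nielsen–Parsons argumentation framework. -/
def IsNPFramework (S : Set (Arg A)) (G : Set (Set (Arg A) × Arg A)) : Prop :=
  S.Finite ∧ ∀ p ∈ G, p.1.Nonempty ∧ p.1 ⊆ S ∧ p.2 ∈ S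

end CoalitionArg

/-!
Definedness of `R` can be decided one argument at a time: axiom (2) restricts `R(S₁, s)` to every
singleton `{(a, n)}` of `S₁`, axiom (5) raises the capacity to get `R({(a, m)}, s)`, coherence of
`S₂` makes every element of `S₂` such an `(a, m)`, and axiom (3) reassembles the finite set `S₂`
from these singletons.
-/

namespace CoalitionArg.IsAttackStrength

variable {A : Type*} {R : AttFun A} {s : Arg A}

theorem nonempty_of_rdef (hR : IsAttackStrength R) {T : Set (Arg A)} (h : RDef R T s) :
    T.Nonempty := by
  rw [Set.nonempty_iff_ne_empty]
  rintro rfl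
  simp [RDef, hR.empty_undef] at h

theorem rdef_singleton_of_mem (hR : IsAttackStrength R) {T : Set (Arg A)} {p : Arg A}
    (h : RDef R T s) (hp : p ∈ T) : RDef R {p} s :=
  hR.subset_def T {p} s h (Set.singleton_subset_iff.mpr hp) (Set.singleton_nonempty p)

theorem rdef_singleton_of_le (hR : IsAttackStrength R) {a : A} {n m : ℕ}
    (h : RDef R {(a, n)} s) (hnm : n ≤ m) : RDef R {(a, m)} s := by
  obtain ⟨k, hk⟩ := Option.isSome_iff_exists.mp h
  obtain ⟨k', hk', -⟩ := hR.mono_source_cap {(a, n)} s a n m k hk rfl hnm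
  rw [Set.sdiff_self, Set.empty_union] at hk'
  simp [RDef, hk']

theorem rdef_of_forall_rdef_singleton (hR : IsAttackStrength R) {T : Set (Arg A)}
    (hT : T.Finite) (hne : T.Nonempty) (h : ∀ p ∈ T, RDef R {p} s) : RDef R T s := by
  induction T, hT using Set.Finite.induction_on with
  | empty => exact absurd hne Set.not_nonempty_empty
  | @insert p F _ _ ih =>
    have hp : RDef R {p} s := h p (Set.mem_insert p F)
    rcases F.eq_empty_or_nonempty with rfl | hF
    · rwa [insert_empty_eq]
    · rw [Set.insert_eq]
      exact hR.union_def _ _ s hp (ih hF fun q hq => h q (Set.mem_insert_of_mem p hq))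

end CoalitionArg.IsAttackStrength

open CoalitionArg in
theorem generalised_attack_monotonicity_general {A : Type*} (R : AttFun A)
    (hR : IsAttackStrength R) (S₁ S₂ : Set (Arg A)) (s : Arg A)
    (h₂ : Coherent S₂)
    (hdef : RDef R S₁ s)
    (hids : Prod.fst '' S₁ = Prod.fst '' S₂)
    (hcap : ∀ p ∈ S₁, ∃ m, p.2 ≤ m ∧ (p.1, m) ∈ S₂) :
    RDef R S₂ s := by
  have hS₂ne : S₂.Nonempty := by
    obtain ⟨p, hp⟩ := hR.nonempty_of_rdef hdef
    obtain ⟨m, -, hm⟩ := hcap p hp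
    exact ⟨_, hm⟩
  refine hR.rdef_of_forall_rdef_singleton h₂.1 hS₂ne fun q hq => ?_
  obtain ⟨p, hp, hpq⟩ : q.1 ∈ Prod.fst '' S₁ := hids ▸ Set.mem_image_of_mem Prod.fst hq
  obtain ⟨m, hpm, hm⟩ := hcap p hp
  have hq_eq : q = (p.1, m) := Prod.ext hpq.symm (h₂.2.2 q hq _ hm hpq.symm)
  rw [hq_eq]
  exact hR.rdef_singleton_of_le (hR.rdef_singleton_of_mem hdef hp) hpm

open CoalitionArg in
/-- Generalised attack monotonicity 1. -/
theorem generalised_attack_monotonicity {A : Type*} (R : AttFun A)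
    (hR : IsAttackStrength R) (S₁ S₂ : Set (Arg A)) (s : Arg A)
    (h₁ : Coherent S₁) (h₂ : Coherent S₂)
    (hdef : RDef R S₁ s)
    (hids : Prod.fst '' S₁ = Prod.fst '' S₂)
    (hcap : ∀ p ∈ S₁, ∃ m, p.2 ≤ m ∧ (p.1, m) ∈ S₂) :
    RDef R S₂ s :=
  generalised_attack_monotonicity_general R hR S₁ S₂ s h₂ hdef hids hcap
end

section
/- In the restricted framework (S,R↓), if α is defined for S₁ ⊆ S, then α(S₁) = S₁ and π₁(View_{R↓}(S,S₁)) = S. -/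
/-! Every attack inside `S` is a defeat, so a conflict-eliminable `S₁ ⊆ S` attacks none of its
own members. Hence `V^max(S₁, s) = 0` for every `s ∈ S₁`, and `α` removes no capacity. -/

namespace CoalitionArg

variable {A : Type*}

section IntrinsicArguments

variable {R : AttFun A} {S S₁ : Set (Arg A)} {s : Arg A}

theorem Vmax_eq_zero_of_not_attacks (h : ¬ Attacks R S₁ s) : Vmax R S₁ s = 0 := by
  suffices {n | ∃ S₂ ⊆ S₁, R S₂ s = some n} = ∅ by rw [Vmax, this, csSup_empty, bot_eq_zero]
  refine Set.eq_empty_of_forall_notMem ?_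
  rintro n ⟨S₂, hS₂, hn⟩
  exact h ⟨S₂, hS₂, Option.isSome_iff_exists.2 ⟨n, hn⟩⟩

theorem alpha_eq_self_of_Vmax_eq_zero (h : ∀ s ∈ S₁, Vmax R S₁ s = 0) : alpha R S₁ = S₁ :=
  calc alpha R S₁ = id '' S₁ := Set.image_congr fun s hs => by simp [h s hs]
    _ = S₁ := Set.image_id S₁

theorem viewArgs_eq_of_alpha_eq_self (hS₁ : S₁ ⊆ S) (h : alpha R S₁ = S₁) :
    viewArgs R S S₁ = S := by
  rw [viewArgs, h, Set.sdiff_union_of_subset hS₁]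

end IntrinsicArguments

end CoalitionArg
open CoalitionArg in
theorem restricted_alpha_eq_general {A : Type*}
    (R : AttFun A) (S : Set (Arg A))
    (hdefeat : ∀ S₁ ⊆ S, ∀ s ∈ S, Attacks R S₁ s → Defeats R S₁ s) :
    ∀ S₁ ⊆ S, ConfElim R S₁ →
      alpha R S₁ = S₁ ∧ viewArgs R S S₁ = S := by
  intro S₁ hS₁ hce
  have hVmax : ∀ s ∈ S₁, Vmax R S₁ s = 0 := fun s hs =>
    Vmax_eq_zero_of_not_attacks fun hatt => hce s hs (hdefeat S₁ hS₁ s (hS₁ hs) hatt)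
  have halpha : alpha R S₁ = S₁ := alpha_eq_self_of_Vmax_eq_zero hVmax
  exact ⟨halpha, viewArgs_eq_of_alpha_eq_self hS₁ halpha⟩

open CoalitionArg in
/-- In the restricted framework, `α(S₁) = S₁` and the view's argument set is `S`. -/
theorem restricted_alpha_eq {A : Type*}
    (R : AttFun A) (S : Set (Arg A))
    (hcoh : Coherent S) (hR : IsAttackStrengthRestr R)
    (hdefeat : ∀ S₁ ⊆ S, ∀ s ∈ S, Attacks R S₁ s → Defeats R S₁ s) :
    ∀ S₁ ⊆ S, ConfElim R S₁ →
      alpha R S₁ = S₁ ∧ viewArgs R S S₁ = S :=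
  restricted_alpha_eq_general R S hdefeat
end

section
/- In the restricted framework (S,R↓), let G = {(S₂,s) : S₂ ⊆ S, s ∈ S, R↓(S₂,s) is defined}. Then (S,G) is a Nielsen–Parsons argumentation framework, every c-admissible subset of S is NP-admissible in (S,G), and every c-preferred subset of S is NP-preferred in (S,G). -/
/-!
When every attack is a defeat, a conflict-eliminable set contains no internal attacks at all.
Its maximal internal attack strengths are then zero, so `α` leaves it unchanged, nothing is
deleted from the attack function, and its view is the whole framework: c-attacks and
c-defeats become ordinary attacks. Both admissibility notions therefore say the same thing,
the only difference being that NP-defence quantifies over minimal attacks only; finiteness of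
`S` lets every attack be shrunk to a minimal one. Since the two notions of admissibility
agree, so do the two notions of preferredness.
-/

namespace CoalitionArg

variable {A : Type*}

def ConflictFree (R : AttFun A) (S₁ : Set (Arg A)) : Prop :=
  ∀ s ∈ S₁, ¬ Attacks R S₁ s

def AttacksAreDefeats (R : AttFun A) (S : Set (Arg A)) : Prop :=
  ∀ S₁ ⊆ S, ∀ s ∈ S, Attacks R S₁ s → Defeats R S₁ s

/-- The attack relation `G` of the Nielsen–Parsons framework induced by `R` on `S`. -/
def attackGraph (R : AttFun A) (S : Set (Arg A)) : Set (Set (Arg A) × Arg A) :=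
  {p | p.1 ⊆ S ∧ p.2 ∈ S ∧ RDef R p.1 p.2}

section View

variable {R : AttFun A} {S S₁ : Set (Arg A)}

theorem ConflictFree.confElim (h : ConflictFree R S₁) : ConfElim R S₁ :=
  fun s hs hd => h s hs hd.1

theorem ConfElim.conflictFree (hRS : AttacksAreDefeats R S) (hS₁ : S₁ ⊆ S)
    (h : ConfElim R S₁) : ConflictFree R S₁ :=
  fun s hs hatt => h s hs (hRS S₁ hS₁ s (hS₁ hs) hatt)

theorem ConflictFree.not_rDef (h : ConflictFree R S₁) {s : Arg A} (hs : s ∈ S₁)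
    {T : Set (Arg A)} (hT : T ⊆ S₁) : ¬ RDef R T s :=
  fun hdef => h s hs ⟨T, hT, hdef⟩

theorem vmax_eq_zero {s : Arg A} (h : ¬ Attacks R S₁ s) : Vmax R S₁ s = 0 := by
  have hempty : {n | ∃ S₂ ⊆ S₁, R S₂ s = some n} = ∅ :=
    Set.eq_empty_of_forall_notMem fun n ⟨S₂, hS₂, hn⟩ => h ⟨S₂, hS₂, by simp [RDef, hn]⟩
  rw [Vmax, hempty, csSup_empty]
  rfl

theorem ConflictFree.alpha_eq (h : ConflictFree R S₁) : alpha R S₁ = S₁ := by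
  have hfix : ∀ s ∈ S₁, (s.1, s.2 - Vmax R S₁ s) = s := fun s hs => by
    simp [vmax_eq_zero (h s hs)]
  ext p
  constructor
  · rintro ⟨s, hs, rfl⟩
    show (s.1, s.2 - Vmax R S₁ s) ∈ S₁
    rwa [hfix s hs]
  · exact fun hp => ⟨p, hp, hfix p hp⟩

theorem ConflictFree.viewAtt_eq (h : ConflictFree R S₁) : viewAtt R S₁ = R := by
  funext T s
  rw [viewAtt, if_neg]
  rintro ⟨hs, hT, hdef⟩
  exact h.not_rDef hs hT hdef

theorem ConflictFree.viewArgs_eq (h : ConflictFree R S₁) (hS₁ : S₁ ⊆ S) :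
    viewArgs R S S₁ = S := by
  rw [viewArgs, h.alpha_eq, Set.sdiff_union_of_subset hS₁]

theorem ConflictFree.attacks_of_cDefeats (h : ConflictFree R S₁) {s : Arg A}
    (hc : CDefeats R S₁ s) : Attacks R S₁ s := by
  obtain ⟨-, S₃, hS₃, n, hn, -⟩ := hc
  rw [h.alpha_eq] at hS₃
  rw [h.viewAtt_eq] at hn
  exact ⟨S₃, hS₃, by simp [RDef, hn]⟩

theorem ConflictFree.cDefeats_of_defeats (h : ConflictFree R S₁) {s : Arg A}
    (hd : Defeats R S₁ s) : CDefeats R S₁ s := by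
  obtain ⟨-, T, hT, n, hn, -, hcap⟩ := hd
  have hT' : T ⊆ alpha R S₁ := h.alpha_eq.symm ▸ hT
  have hn' : viewAtt R S₁ T s = some n := by rw [h.viewAtt_eq, hn]
  exact ⟨⟨h.confElim, T, hT', by simp [RDef, hn']⟩, T, hT', n, hn', hcap⟩

end View

section NielsenParsons

variable {G : Set (Set (Arg A) × Arg A)}

theorem exists_npMinimal_subset {Sx : Set (Arg A)} {a : Arg A} (hfin : Sx.Finite)
    (h : (Sx, a) ∈ G) : ∃ Ax ⊆ Sx, NPminimal G Ax a := by
  obtain ⟨Ax, ⟨hAx, hG⟩, hmin⟩ :=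
    (hfin.finite_subsets.subset fun T (hT : T ⊆ Sx ∧ (T, a) ∈ G) => hT.1).exists_minimal
      ⟨Sx, subset_rfl, h⟩
  exact ⟨Ax, hAx, hG, fun A'' hA'' hG'' =>
    hA''.not_subset (hmin ⟨hA''.subset.trans hAx, hG''⟩ hA''.subset)⟩

variable {R : AttFun A} {S S₁ : Set (Arg A)}

theorem npAttacks_attackGraph_iff (hS₁ : S₁ ⊆ S) {a : Arg A} (ha : a ∈ S) :
    NPattacks (attackGraph R S) S₁ a ↔ Attacks R S₁ a :=
  ⟨fun ⟨A', hA', _, _, hdef⟩ => ⟨A', hA', hdef⟩,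
    fun ⟨A', hA', hdef⟩ => ⟨A', hA', hA'.trans hS₁, ha, hdef⟩⟩

theorem isNPFramework_attackGraph (hfin : S.Finite) (hempty : ∀ s, R ∅ s = none) :
    IsNPFramework S (attackGraph R S) := by
  refine ⟨hfin, fun p ⟨hp₁, hp₂, hdef⟩ => ⟨?_, hp₁, hp₂⟩⟩
  rw [Set.nonempty_iff_ne_empty]
  rintro h
  simp [RDef, h, hempty] at hdef

theorem CAdmissible.npAdmissible (hRS : AttacksAreDefeats R S) (hS₁ : S₁ ⊆ S)
    (h : CAdmissible R S S₁) : NPadmissible (attackGraph R S) S S₁ := by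
  have hcf := h.1.conflictFree hRS hS₁
  refine ⟨hS₁, fun a ha hatt => hcf a ha ((npAttacks_attackGraph_iff hS₁ (hS₁ ha)).1 hatt),
    fun a ha Ax hAxS hmin => ?_⟩
  have hdef := hmin.1.2.2
  obtain ⟨ax, hax, hcd⟩ :=
    h.2 Ax (hcf.viewArgs_eq hS₁ |>.symm ▸ hAxS) a ha ⟨Ax, subset_rfl, hdef⟩ Ax subset_rfl hdef
  exact ⟨ax, hax, (npAttacks_attackGraph_iff hS₁ (hAxS hax)).2 (hcf.attacks_of_cDefeats hcd)⟩

theorem NPadmissible.cAdmissible (hfin : S.Finite) (hRS : AttacksAreDefeats R S)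
    (h : NPadmissible (attackGraph R S) S S₁) : CAdmissible R S S₁ := by
  obtain ⟨hS₁, hnpcf, hdefends⟩ := h
  have hcf : ConflictFree R S₁ := fun s hs hatt =>
    hnpcf s hs ((npAttacks_attackGraph_iff hS₁ (hS₁ hs)).2 hatt)
  refine ⟨hcf.confElim, fun S₂ hS₂ s hs _ Sx hSx hdef => ?_⟩
  have hSxS : Sx ⊆ S := hSx.trans (hcf.viewArgs_eq hS₁ ▸ hS₂)
  obtain ⟨Ax, hAx, hmin⟩ := exists_npMinimal_subset (G := attackGraph R S)
    (hfin.subset hSxS) ⟨hSxS, hS₁ hs, hdef⟩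
  obtain ⟨ax, hax, hatt⟩ := hdefends s hs Ax (hAx.trans hSxS) hmin
  have haxS : ax ∈ S := hSxS (hAx hax)
  rw [npAttacks_attackGraph_iff hS₁ haxS] at hatt
  exact ⟨ax, hAx hax, hcf.cDefeats_of_defeats (hRS S₁ hS₁ ax haxS hatt)⟩

theorem CPreferred.npPreferred (hfin : S.Finite) (hRS : AttacksAreDefeats R S)
    (hS₁ : S₁ ⊆ S) (h : CPreferred R S S₁) : NPpreferred (attackGraph R S) S S₁ :=
  ⟨h.1.npAdmissible hRS hS₁, fun ⟨A₂, hlt, hA₂, hadm⟩ =>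
    h.2 ⟨A₂, hlt, hA₂, hadm.cAdmissible hfin hRS⟩⟩

end NielsenParsons

end CoalitionArg

open CoalitionArg in
/-- The restricted framework is a Nielsen–Parsons framework; c-admissible sets
are NP-admissible and c-preferred sets are NP-preferred. -/
theorem restricted_is_NP {A : Type*}
    (R : AttFun A) (S : Set (Arg A))
    (hcoh : Coherent S) (hR : IsAttackStrengthRestr R)
    (hdefeat : ∀ S₁ ⊆ S, ∀ s ∈ S, Attacks R S₁ s → Defeats R S₁ s) :
    IsNPFramework S {p : Set (Arg A) × Arg A | p.1 ⊆ S ∧ p.2 ∈ S ∧ RDef R p.1 p.2} ∧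
    (∀ S₁ ⊆ S, CAdmissible R S S₁ →
      NPadmissible {p : Set (Arg A) × Arg A | p.1 ⊆ S ∧ p.2 ∈ S ∧ RDef R p.1 p.2} S S₁) ∧
    (∀ S₁ ⊆ S, CPreferred R S S₁ →
      NPpreferred {p : Set (Arg A) × Arg A | p.1 ⊆ S ∧ p.2 ∈ S ∧ RDef R p.1 p.2} S S₁) :=
  ⟨isNPFramework_attackGraph hcoh.1 hR.empty_undef,
    fun _ hS₁ h => h.npAdmissible hdefeat hS₁,
    fun _ hS₁ h => h.npPreferred hcoh.1 hdefeat hS₁⟩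
end

section
/- Defeats are unresolvable: For any argumentation framework (S,R), any S₁ ⊆ S and any s ∈ S₁, if S₁ defeats s, then every S₂ with S₁ ⊆ S₂ ⊆ S also defeats s. -/
namespace CoalitionArg

variable {A : Type*}

/-! Over the subsets of a finite set the attack strengths on `s` form a finite set, so `Vmax` is
an attained maximum; enlarging the attacking set can only raise it, so a capacity it reaches
stays reached. -/

variable {R : AttFun A} {S T : Set (Arg A)} {s : Arg A} {n : ℕ}

theorem finite_attackStrengths (hS : S.Finite) :
    {n | ∃ T ⊆ S, R T s = some n}.Finite := by
  refine (hS.finite_subsets.image fun T => (R T s).getD 0).subset ?_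
  rintro n ⟨T, hT, hn⟩
  exact ⟨T, hT, by simp [hn]⟩

theorem le_Vmax (hS : S.Finite) (hT : T ⊆ S) (hn : R T s = some n) : n ≤ Vmax R S s :=
  le_csSup (finite_attackStrengths hS).bddAbove ⟨T, hT, hn⟩

theorem exists_eq_Vmax (hS : S.Finite) (hT : T ⊆ S) (hn : R T s = some n) :
    ∃ T ⊆ S, R T s = some (Vmax R S s) :=
  (show {m | ∃ T ⊆ S, R T s = some m}.Nonempty from ⟨n, T, hT, hn⟩).csSup_mem
    (finite_attackStrengths hS)

theorem defeats_of_le_Vmax (hS : S.Finite) (hT : T ⊆ S) (hn : R T s = some n)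
    (hcap : s.2 ≤ Vmax R S s) : Defeats R S s := by
  obtain ⟨T', hT', hmax⟩ := exists_eq_Vmax hS hT hn
  exact ⟨⟨T, hT, by simp [RDef, hn]⟩, T', hT', Vmax R S s, hmax,
    fun _ hSx _ hm => le_Vmax hS hSx hm, hcap⟩

theorem Defeats.mono {S₁ S₂ : Set (Arg A)} (hS₂ : S₂.Finite) (h₁₂ : S₁ ⊆ S₂)
    (hd : Defeats R S₁ s) : Defeats R S₂ s := by
  obtain ⟨-, T, hT, n, hn, -, hcap⟩ := hd
  exact defeats_of_le_Vmax hS₂ (hT.trans h₁₂) hn (hcap.trans (le_Vmax hS₂ (hT.trans h₁₂) hn))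

end CoalitionArg

open CoalitionArg in
theorem defeats_unresolvable_general {A : Type*} (F : AF A)
    (S₁ S₂ : Set (Arg A)) (s : Arg A)
    (h₁₂ : S₁ ⊆ S₂) (h₂ : S₂ ⊆ F.args)
    (hd : Defeats F.att S₁ s) :
    Defeats F.att S₂ s :=
  hd.mono (F.coherent.1.subset h₂) h₁₂

open CoalitionArg in
/-- Defeats are unresolvable. -/
theorem defeats_unresolvable {A : Type*} (F : AF A)
    (S₁ S₂ : Set (Arg A)) (s : Arg A)
    (h₁₂ : S₁ ⊆ S₂) (h₂ : S₂ ⊆ F.args) (hs : s ∈ S₁)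
    (hd : Defeats F.att S₁ s) :
    Defeats F.att S₂ s :=
  defeats_unresolvable_general F S₁ S₂ s h₁₂ h₂ hd
end

section
/- Coalition and conflict-eliminability: For any argumentation framework (S,R), if coalition is permitted between S₁ ⊆ S and S₂ ⊆ S, then α is defined for S₁ and for S₂, i.e. both S₁ and S₂ are conflict-eliminable. -/
namespace CoalitionArg

variable {A : Type*}

section Defeat

variable {R : AttFun A} {T U : Set (Arg A)} {s : Arg A}

lemma finite_attack_values (hU : U.Finite) : {n | ∃ S ⊆ U, R S s = some n}.Finite :=
  (hU.finite_subsets.image fun S => (R S s).getD 0).subset <| by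
    rintro n ⟨S, hS, hRS⟩
    exact ⟨S, hS, by simp [hRS]⟩

lemma le_Vmax_s10 (hU : U.Finite) {S : Set (Arg A)} {n : ℕ} (hS : S ⊆ U) (hRS : R S s = some n) :
    n ≤ Vmax R U s :=
  le_csSup (finite_attack_values hU).bddAbove ⟨S, hS, hRS⟩

lemma exists_eq_Vmax_s10 (hU : U.Finite) {S : Set (Arg A)} {n : ℕ} (hS : S ⊆ U)
    (hRS : R S s = some n) : ∃ S' ⊆ U, R S' s = some (Vmax R U s) :=
  Nat.sSup_mem (s := {n | ∃ S ⊆ U, R S s = some n}) ⟨n, S, hS, hRS⟩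
    (finite_attack_values hU).bddAbove

/-- Finiteness of `U` is what makes the maximal attack strength in `Defeats` attained. -/
lemma defeats_of_capacity_le (hU : U.Finite) {S : Set (Arg A)} {n : ℕ} (hS : S ⊆ U)
    (hRS : R S s = some n) (hcap : s.2 ≤ n) : Defeats R U s := by
  obtain ⟨S', hS', hRS'⟩ := exists_eq_Vmax_s10 hU hS hRS
  exact ⟨⟨S, hS, by simp [RDef, hRS]⟩, S', hS', Vmax R U s, hRS',
    fun _ hSx _ hRSx => le_Vmax_s10 hU hSx hRSx, hcap.trans (le_Vmax_s10 hU hS hRS)⟩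

lemma Defeats.mono_s10 (hT : Defeats R T s) (hTU : T ⊆ U) (hU : U.Finite) : Defeats R U s := by
  obtain ⟨-, S, hS, n, hRS, -, hcap⟩ := hT
  exact defeats_of_capacity_le hU (hS.trans hTU) hRS hcap

lemma ConfElim.anti (hU : ConfElim R U) (hTU : T ⊆ U) (hUfin : U.Finite) : ConfElim R T :=
  fun s hs hT => hU s (hTU hs) (hT.mono_s10 hTU hUfin)

end Defeat

end CoalitionArg

open CoalitionArg in
/-- Coalition permission implies conflict-eliminability of both parties. -/
theorem coalition_permitted_confElim {A : Type*} (F : AF A)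
    (S₁ S₂ : Set (Arg A)) (h₁ : S₁ ⊆ F.args) (h₂ : S₂ ⊆ F.args)
    (hperm : CoalitionPermitted F.att S₁ S₂) :
    ConfElim F.att S₁ ∧ ConfElim F.att S₂ := by
  have hfin : (S₁ ∪ S₂).Finite := F.coherent.1.subset (Set.union_subset h₁ h₂)
  exact ⟨hperm.2.anti Set.subset_union_left hfin, hperm.2.anti Set.subset_union_right hfin⟩
end

section
/- Independence of the profitability axioms: For each of the three axioms of ⊴ — (larger set), (better state) and (fewer attackers) — there exists an argumentation framework (S,R) and subsets S₁, S₂ ⊆ S, with α defined for both, such that the pair (S₁,S₂) satisfies that axiom but satisfies neither of the other two. -/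
/-!
All three pairs live in one framework with four arguments `a = (a, 2)`, `b₁ = (b₁, 1)`,
`b₂ = (b₂, 1)`, `c = (c, 2)`, in which every attack has strength 1: `b₁`, `b₂` and `c` attack
`a`, and `a` attacks `c` always but `b₁`, `b₂` only at capacity at least 2.

Alone, `a` c-attacks all its attackers and c-defeats all but `c`. In the coalition `{a, c}`
the mutual attack lowers the capacity of `a` to 1, so `{a, c}` can no longer answer `b₁`:
it is one-directionally attacked and leaves both `b₁` and `b₂` undefeated. Hence
`({a}, {a, c})` satisfies only (larger set). The pair `({a}, ∅)` satisfies only (better state),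
since `∅` is c-admissible but c-defeats nothing. The pair `({b₁}, {a, c})` satisfies only
(fewer attackers): the one attacker `a` of `b₁` lies in `{a, c}`, and `{b₁}` c-attacks it.
-/

namespace CoalitionArg

variable {A : Type*} {R : AttFun A} {S S₁ S₂ T : Set (Arg A)} {p s : Arg A}

theorem confElim_empty (R : AttFun A) : ConfElim R ∅ := fun _ h => h.elim

theorem cAdmissible_empty (R : AttFun A) (S : Set (Arg A)) : CAdmissible R S ∅ :=
  ⟨confElim_empty R, fun _ _ _ h => h.elim⟩

theorem stateLeq_of_cAdmissible (h₁ : ConfElim R S₁) (h₂ : CAdmissible R S S₂) :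
    StateLeq R S S₁ S₂ :=
  ⟨h₁, h₂.1, Or.inl h₂⟩

theorem OneDirAttacked.not_cAdmissible (h : OneDirAttacked R S S₁) : ¬ CAdmissible R S S₁ := by
  rintro ⟨-, hadm⟩
  obtain ⟨-, Sx, hSx, ⟨s, hs, T, hT, hdef⟩, hnot⟩ := h
  obtain ⟨p, hp, hdefeat⟩ := hadm Sx hSx s hs ⟨T, hT, hdef⟩ T hT hdef
  exact hnot p (hT hp) hdefeat.1

theorem not_stateLeq_of_oneDirAttacked (h₁ : ¬ OneDirAttacked R S S₁)
    (h₂ : OneDirAttacked R S S₂) : ¬ StateLeq R S S₁ S₂ := by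
  rintro ⟨-, -, h | h | ⟨-, -, -, h⟩⟩
  exacts [h₂.not_cAdmissible h, h₁ h, h h₂]

theorem fewerAttackers_of_attacker_subset (h : Attacker R S S₁ ⊆ S₂) :
    FewerAttackers R S S₁ S₂ := by
  have hempty : UndefAtt R S S₁ S₂ = ∅ :=
    Set.eq_empty_of_forall_notMem fun _ hs => hs.2.2 (h hs.1)
  rw [FewerAttackers, hempty, Set.ncard_empty]
  exact Nat.zero_le _

theorem alpha_eq_self (h : ∀ s ∈ T, Vmax R T s = 0) : alpha R T = T := by
  conv_rhs => rw [← Set.image_id T]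
  exact Set.image_congr fun s hs => by simp [h s hs]

theorem viewAtt_of_notMem (h : s ∉ S₁) : viewAtt R S₁ T s = R T s :=
  if_neg fun hdel => h hdel.1

namespace IsAttackStrength

theorem exists_singleton_attacks (hR : IsAttackStrength R) (h : Attacks R T s) :
    ∃ p ∈ T, Attacks R {p} s := by
  obtain ⟨T', hT', hdef⟩ := h
  obtain ⟨p, hp⟩ : T'.Nonempty := by
    rw [Set.nonempty_iff_ne_empty]
    rintro rfl
    simp [RDef, hR.empty_undef] at hdef
  exact ⟨p, hT' hp, {p}, subset_rfl,
    hR.subset_def _ _ _ hdef (Set.singleton_subset_iff.2 hp) ⟨p, rfl⟩⟩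

theorem not_oneDirAttacked (hR : IsAttackStrength R)
    (h : ∀ s ∈ S₁, ∀ p, Attacks R {p} s → CAttacks R S₁ p) :
    ¬ OneDirAttacked R S S₁ := by
  rintro ⟨-, Sx, -, ⟨s, hs, hatt⟩, hnot⟩
  obtain ⟨p, hp, hps⟩ := hR.exists_singleton_attacks hatt
  exact hnot p hp (h s hs p hps)

theorem not_cAttacks_empty (hR : IsAttackStrength R) (s : Arg A) : ¬ CAttacks R ∅ s := by
  rintro ⟨-, T, hT, hdef⟩
  rw [alpha, Set.image_empty, Set.subset_empty_iff] at hT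
  subst hT
  simp [RDef, viewAtt, hR.empty_undef] at hdef

end IsAttackStrength

section UnitAtt

variable (r : Arg A → Arg A → Prop)

open Classical in
noncomputable def unitAtt : AttFun A := fun T s =>
  if T.Nonempty ∧ ∀ p ∈ T, r p s then some 1 else none

variable {r}

theorem unitAtt_eq_some {n : ℕ} :
    unitAtt r T s = some n ↔ (T.Nonempty ∧ ∀ p ∈ T, r p s) ∧ n = 1 := by
  unfold unitAtt
  split_ifs with h
  · exact ⟨fun he => ⟨h, (Option.some.inj he).symm⟩, fun hc => by rw [hc.2]⟩
  · exact iff_of_false (by simp) fun hc => h hc.1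

theorem rDef_unitAtt : RDef (unitAtt r) T s ↔ T.Nonempty ∧ ∀ p ∈ T, r p s := by
  unfold RDef unitAtt
  split_ifs with h
  · exact iff_of_true rfl h
  · exact iff_of_false (by simp) h

theorem unitAtt_singleton (h : r p s) : unitAtt r {p} s = some 1 :=
  unitAtt_eq_some.2 ⟨⟨⟨p, rfl⟩, by simpa⟩, rfl⟩

theorem isAttackStrength_unitAtt (irrefl : ∀ s, ¬ r s s)
    (mono_source : ∀ a n m s, r (a, n) s → n ≤ m → r (a, m) s)
    (mono_target : ∀ p a n m, r p (a, n) → n ≤ m → r p (a, m)) :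
    IsAttackStrength (unitAtt r) where
  empty_undef s := if_neg fun h => h.1.ne_empty rfl
  subset_def S₁ S₂ s h hsub hne := by
    rw [rDef_unitAtt] at h ⊢
    exact ⟨hne, fun p hp => h.2 p (hsub hp)⟩
  union_def S₁ S₂ s h₁ h₂ := by
    rw [rDef_unitAtt] at h₁ h₂ ⊢
    exact ⟨h₁.1.inl, fun p hp => hp.elim (h₁.2 p) (h₂.2 p)⟩
  pos S₁ s n h := by
    rw [(unitAtt_eq_some.1 h).2]
    exact one_pos
  mono_source_cap S₁ s a n m k h hmem hle := by
    obtain ⟨⟨-, hall⟩, rfl⟩ := unitAtt_eq_some.1 h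
    refine ⟨1, unitAtt_eq_some.2 ⟨⟨⟨(a, m), .inr rfl⟩, ?_⟩, rfl⟩, le_rfl⟩
    rintro p (⟨hp, -⟩ | rfl)
    exacts [hall p hp, mono_source a n m s (hall _ hmem) hle]
  mono_source_inter S₁ S₂ s k₁ k₂ k h₁ h₂ h := by
    rw [(unitAtt_eq_some.1 h₁).2, (unitAtt_eq_some.1 h₂).2, (unitAtt_eq_some.1 h).2]
    exact ⟨le_rfl, le_rfl⟩
  mono_target S₁ a n m k h _ hle := by
    obtain ⟨⟨hne, hall⟩, rfl⟩ := unitAtt_eq_some.1 h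
    exact ⟨1, unitAtt_eq_some.2 ⟨⟨hne, fun p hp => mono_target p a n m (hall p hp) hle⟩, rfl⟩,
      le_rfl⟩
  no_self S₁ s hs := if_neg fun h => irrefl s (h.2 s hs)

theorem attacks_unitAtt : Attacks (unitAtt r) T s ↔ ∃ p ∈ T, r p s := by
  constructor
  · rintro ⟨T', hT', hdef⟩
    obtain ⟨⟨p, hp⟩, hall⟩ := rDef_unitAtt.1 hdef
    exact ⟨p, hT' hp, hall p hp⟩
  · rintro ⟨p, hp, h⟩
    exact ⟨{p}, Set.singleton_subset_iff.2 hp, rDef_unitAtt.2 ⟨⟨p, rfl⟩, by simpa⟩⟩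

theorem attacks_unitAtt_singleton : Attacks (unitAtt r) {p} s ↔ r p s := by
  simp [attacks_unitAtt]

open Classical in
theorem vmax_unitAtt : Vmax (unitAtt r) T s = if ∃ p ∈ T, r p s then 1 else 0 := by
  have hvalues : {n | ∃ T' ⊆ T, unitAtt r T' s = some n} =
      if ∃ p ∈ T, r p s then {1} else ∅ := by
    rw [← attacks_unitAtt]
    split_ifs with h
    · ext n
      refine ⟨fun ⟨_, _, hn⟩ => (unitAtt_eq_some.1 hn).2, ?_⟩
      rintro rfl
      obtain ⟨p, hp, hr⟩ := attacks_unitAtt.1 h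
      exact ⟨{p}, Set.singleton_subset_iff.2 hp, unitAtt_singleton hr⟩
    · refine Set.eq_empty_of_forall_notMem fun n ⟨T', hT', hn⟩ => h ⟨T', hT', ?_⟩
      simp [RDef, hn]
  rw [Vmax, hvalues]
  split_ifs <;> simp

theorem defeats_unitAtt : Defeats (unitAtt r) T s ↔ (∃ p ∈ T, r p s) ∧ s.2 ≤ 1 := by
  constructor
  · rintro ⟨hatt, _, _, n, hn, -, hcap⟩
    exact ⟨attacks_unitAtt.1 hatt, (unitAtt_eq_some.1 hn).2 ▸ hcap⟩
  · rintro ⟨⟨p, hp, h⟩, hcap⟩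
    refine ⟨attacks_unitAtt.2 ⟨p, hp, h⟩, {p}, Set.singleton_subset_iff.2 hp, 1,
      unitAtt_singleton h, fun _ _ m hm => (unitAtt_eq_some.1 hm).2.le, hcap⟩

theorem confElim_unitAtt : ConfElim (unitAtt r) T ↔ ∀ s ∈ T, (∃ p ∈ T, r p s) → 1 < s.2 := by
  simp only [ConfElim, defeats_unitAtt, not_and, not_le]

theorem alpha_unitAtt_of_forall_not (h : ∀ s ∈ T, ∀ p ∈ T, ¬ r p s) : alpha (unitAtt r) T = T :=
  alpha_eq_self fun s hs => by simpa [vmax_unitAtt] using h s hs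

theorem CAttacks.exists_of_unitAtt (h : CAttacks (unitAtt r) S₁ s) :
    ∃ p ∈ alpha (unitAtt r) S₁, r p s := by
  obtain ⟨-, T, hT, hdef⟩ := h
  unfold RDef viewAtt at hdef
  split_ifs at hdef
  · simp at hdef
  · obtain ⟨⟨p, hp⟩, hall⟩ := rDef_unitAtt.1 hdef
    exact ⟨p, hT hp, hall p hp⟩

theorem cAttacks_unitAtt (hS₁ : ConfElim (unitAtt r) S₁) (hs : s ∉ S₁)
    (hp : p ∈ alpha (unitAtt r) S₁) (h : r p s) : CAttacks (unitAtt r) S₁ s :=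
  ⟨hS₁, {p}, Set.singleton_subset_iff.2 hp, by
    simp [RDef, viewAtt_of_notMem hs, unitAtt_singleton h]⟩

theorem cDefeats_unitAtt (hS₁ : ConfElim (unitAtt r) S₁) (hs : s ∉ S₁)
    (hp : p ∈ alpha (unitAtt r) S₁) (h : r p s) (hcap : s.2 ≤ 1) :
    CDefeats (unitAtt r) S₁ s :=
  ⟨cAttacks_unitAtt hS₁ hs hp h, {p}, Set.singleton_subset_iff.2 hp, 1,
    by rw [viewAtt_of_notMem hs, unitAtt_singleton h], hcap⟩

end UnitAtt

end CoalitionArg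

namespace CoalitionArg.Example

open Set

inductive Node
  | a
  | b₁
  | b₂
  | c

def beats : Arg Node → Arg Node → Prop
  | (.a, n), (.b₁, _) => 2 ≤ n
  | (.a, n), (.b₂, _) => 2 ≤ n
  | (.a, _), (.c, _) => True
  | (.b₁, _), (.a, _) => True
  | (.b₂, _), (.a, _) => True
  | (.c, _), (.a, _) => True
  | _, _ => False

def args : Set (Arg Node) := {(.a, 2), (.b₁, 1), (.b₂, 1), (.c, 2)}

noncomputable abbrev R : AttFun Node := unitAtt beats

theorem isAttackStrength_R : IsAttackStrength R :=
  isAttackStrength_unitAtt (by rintro ⟨_ | _ | _ | _, _⟩ <;> simp [beats])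
    (by rintro (_ | _ | _ | _) n m ⟨_ | _ | _ | _, _⟩ h hle <;> simp only [beats] at h ⊢ <;>
      omega)
    (by rintro ⟨_ | _ | _ | _, _⟩ (_ | _ | _ | _) n m h _ <;> simp_all [beats])

theorem coherent_args : Coherent args := by
  refine ⟨by simp [args], by simp [args], ?_⟩
  simp only [args, mem_insert_iff, mem_singleton_iff]
  rintro p (rfl | rfl | rfl | rfl) q (rfl | rfl | rfl | rfl) <;> simp

noncomputable def F : AF Node := ⟨args, R, coherent_args, isAttackStrength_R⟩

def Sa : Set (Arg Node) := {(.a, 2)}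

def Sac : Set (Arg Node) := {(.a, 2), (.c, 2)}

def Sb₁ : Set (Arg Node) := {(.b₁, 1)}

theorem Sa_subset_args : Sa ⊆ args := by simp [Sa, args]

theorem Sac_subset_args : Sac ⊆ args := by simp [Sac, args, insert_subset_iff]

theorem Sb₁_subset_args : Sb₁ ⊆ args := by simp [Sb₁, args]

theorem confElim_Sa : ConfElim R Sa := confElim_unitAtt.2 (by simp [Sa, beats])

theorem confElim_Sac : ConfElim R Sac := confElim_unitAtt.2 (by simp [Sac, beats])

theorem confElim_Sb₁ : ConfElim R Sb₁ := confElim_unitAtt.2 (by simp [Sb₁, beats])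

theorem alpha_Sa : alpha R Sa = Sa := alpha_unitAtt_of_forall_not (by simp [Sa, beats])

theorem alpha_Sb₁ : alpha R Sb₁ = Sb₁ := alpha_unitAtt_of_forall_not (by simp [Sb₁, beats])

theorem alpha_Sac : alpha R Sac = {(.a, 1), (.c, 1)} := by
  rw [alpha, Sac, image_pair, R, vmax_unitAtt, vmax_unitAtt]
  simp [beats]

theorem not_cAttacks_Sac {s : Arg Node} (hs : s.1 = .b₁ ∨ s.1 = .b₂) : ¬ CAttacks R Sac s := by
  intro h
  obtain ⟨p, hp, hr⟩ := h.exists_of_unitAtt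
  rw [alpha_Sac] at hp
  obtain ⟨_ | _ | _ | _, n⟩ := s <;> rcases hp with rfl | rfl <;> simp_all [beats]

theorem oneDirAttacked_Sac : OneDirAttacked R args Sac :=
  ⟨confElim_Sac, {(.b₁, 1)}, by simp [viewArgs, args, Sac],
    ⟨(.a, 2), by simp [Sac],
      attacks_unitAtt_singleton.2 (show beats (.b₁, 1) (.a, 2) from trivial)⟩,
    by simpa using not_cAttacks_Sac (Or.inl rfl)⟩

theorem not_oneDirAttacked_Sa : ¬ OneDirAttacked R args Sa := by
  refine isAttackStrength_R.not_oneDirAttacked fun s hs q hq => ?_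
  rw [Sa, mem_singleton_iff] at hs
  subst hs
  rw [attacks_unitAtt_singleton] at hq
  obtain ⟨_ | _ | _ | _, n⟩ := q <;> simp only [beats] at hq <;>
    exact cAttacks_unitAtt confElim_Sa (by simp [Sa]) (by rw [alpha_Sa]; rfl) (by simp [beats])

theorem not_oneDirAttacked_Sb₁ : ¬ OneDirAttacked R args Sb₁ := by
  refine isAttackStrength_R.not_oneDirAttacked fun s hs q hq => ?_
  rw [Sb₁, mem_singleton_iff] at hs
  subst hs
  rw [attacks_unitAtt_singleton] at hq
  obtain ⟨_ | _ | _ | _, n⟩ := q <;> simp only [beats] at hq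
  exact cAttacks_unitAtt confElim_Sb₁ (by simp [Sb₁]) (by rw [alpha_Sb₁]; rfl) (by simp [beats])

theorem undefAtt_Sa_self_subset : UndefAtt R args Sa Sa ⊆ {(.c, 2)} := by
  rintro s ⟨⟨hs, -⟩, hundef, hnotMem⟩
  simp only [args, mem_insert_iff, mem_singleton_iff] at hs
  have hdefeats : ∀ s : Arg Node, s ∉ Sa → beats (.a, 2) s → s.2 ≤ 1 → CDefeats R Sa s :=
    fun s hs h hcap => cDefeats_unitAtt confElim_Sa hs (by rw [alpha_Sa]; rfl) h hcap
  rcases hs with rfl | rfl | rfl | rfl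
  · exact absurd rfl hnotMem
  · exact absurd (hdefeats _ hnotMem (by simp [beats]) le_rfl) hundef
  · exact absurd (hdefeats _ hnotMem (by simp [beats]) le_rfl) hundef
  · rfl

theorem not_fewerAttackers_Sa {T : Set (Arg Node)} (h₁ : ¬ CAttacks R T (.b₁, 1))
    (h₂ : ¬ CAttacks R T (.b₂, 1)) (h₁' : (.b₁, 1) ∉ T) (h₂' : (.b₂, 1) ∉ T) :
    ¬ FewerAttackers R args Sa T := by
  have hfin : (UndefAtt R args Sa T).Finite := coherent_args.1.subset fun s hs => hs.1.1
  have hpair : {((.b₁, 1) : Arg Node), (.b₂, 1)} ⊆ UndefAtt R args Sa T := by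
    have hattacker : ∀ s : Arg Node, s ∈ args → beats s (.a, 2) → s ∈ Attacker R args Sa :=
      fun s hs h => ⟨hs, (.a, 2), rfl, attacks_unitAtt_singleton.2 h⟩
    rintro s (rfl | rfl)
    exacts [⟨hattacker _ (by simp [args]) trivial, fun h => h₁ h.1, h₁'⟩,
      ⟨hattacker _ (by simp [args]) trivial, fun h => h₂ h.1, h₂'⟩]
  have hle := ncard_le_ncard undefAtt_Sa_self_subset (finite_singleton _)
  have hge := ncard_le_ncard hpair hfin
  rw [ncard_singleton] at hle
  rw [ncard_pair (by simp)] at hge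
  unfold FewerAttackers
  omega

theorem attacker_Sb₁_subset : Attacker R args Sb₁ ⊆ Sac := by
  rintro s ⟨hs, _, hs₁, hatt⟩
  rw [Sb₁, mem_singleton_iff] at hs₁
  subst hs₁
  rw [R, attacks_unitAtt_singleton] at hatt
  simp only [args, mem_insert_iff, mem_singleton_iff] at hs
  rcases hs with rfl | rfl | rfl | rfl <;> simp_all [beats, Sac]

end CoalitionArg.Example

open CoalitionArg in
/-- Independence of the three profitability axioms. -/
theorem profitability_axioms_independent :
    (∃ (A : Type) (F : AF A) (S₁ S₂ : Set (Arg A)),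
      S₁ ⊆ F.args ∧ S₂ ⊆ F.args ∧ ConfElim F.att S₁ ∧ ConfElim F.att S₂ ∧
      S₁ ⊆ S₂ ∧ ¬ StateLeq F.att F.args S₁ S₂ ∧
      ¬ FewerAttackers F.att F.args S₁ S₂) ∧
    (∃ (A : Type) (F : AF A) (S₁ S₂ : Set (Arg A)),
      S₁ ⊆ F.args ∧ S₂ ⊆ F.args ∧ ConfElim F.att S₁ ∧ ConfElim F.att S₂ ∧
      StateLeq F.att F.args S₁ S₂ ∧ ¬ S₁ ⊆ S₂ ∧
      ¬ FewerAttackers F.att F.args S₁ S₂) ∧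
    (∃ (A : Type) (F : AF A) (S₁ S₂ : Set (Arg A)),
      S₁ ⊆ F.args ∧ S₂ ⊆ F.args ∧ ConfElim F.att S₁ ∧ ConfElim F.att S₂ ∧
      FewerAttackers F.att F.args S₁ S₂ ∧ ¬ S₁ ⊆ S₂ ∧
      ¬ StateLeq F.att F.args S₁ S₂) := by
  open CoalitionArg.Example in
  refine ⟨⟨Node, F, Sa, Sac, Sa_subset_args, Sac_subset_args, confElim_Sa, confElim_Sac,
      by simp [Sa, Sac], not_stateLeq_of_oneDirAttacked not_oneDirAttacked_Sa oneDirAttacked_Sac,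
      not_fewerAttackers_Sa (not_cAttacks_Sac (Or.inl rfl)) (not_cAttacks_Sac (Or.inr rfl))
        (by simp [Sac]) (by simp [Sac])⟩,
    ⟨Node, F, Sa, ∅, Sa_subset_args, Set.empty_subset _, confElim_Sa, confElim_empty R,
      stateLeq_of_cAdmissible confElim_Sa (cAdmissible_empty R args), by simp [Sa],
      not_fewerAttackers_Sa (isAttackStrength_R.not_cAttacks_empty _)
        (isAttackStrength_R.not_cAttacks_empty _) (Set.notMem_empty _) (Set.notMem_empty _)⟩,
    ⟨Node, F, Sb₁, Sac, Sb₁_subset_args, Sac_subset_args, confElim_Sb₁, confElim_Sac,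
      fewerAttackers_of_attacker_subset attacker_Sb₁_subset, by simp [Sb₁, Sac],
      not_stateLeq_of_oneDirAttacked not_oneDirAttacked_Sb₁ oneDirAttacked_Sac⟩⟩
end

section
/- Existence theorem: Let (S,R) be an argumentation framework and S₁ ⊆ S. If there exists S₂ ⊆ S such that coalition is permitted between S₁ and S₂, S₁ ⊴ S₁ ∪ S₂, and S₁ ∪ S₂ is c-admissible, then there exists S₃ ⊆ S such that coalition is permitted between S₁ and S₃, S₁ ⊴ S₁ ∪ S₃, S₁ ∪ S₃ is c-preferred, and S₂ ⊆ S₃. -/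
/-! Every attacker outside a c-admissible set is c-defeated by it, so a c-admissible superset of
`S₁` is always a profitable coalition for `S₁`. Enlarging `S₁ ∪ S₂` to a maximal c-admissible
subset `U` of the finite `S`, which is c-preferred, and taking `S₃ = U \ S₁` therefore works. -/

namespace CoalitionArg

variable {A : Type*} {R : AttFun A} {S S₁ T : Set (Arg A)}

theorem CAdmissible.undefAtt_eq_empty (hT : CAdmissible R S T) (hS₁T : S₁ ⊆ T) :
    UndefAtt R S S₁ T = ∅ := by
  refine Set.eq_empty_of_forall_notMem ?_
  rintro s ⟨⟨hsS, s₁, hs₁, Sx, hSx, hdef⟩, hnot, hsT⟩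
  have hview : {s} ⊆ viewArgs R S T := Set.singleton_subset_iff.2 (Or.inl ⟨hsS, hsT⟩)
  obtain ⟨sx, hsx, hcd⟩ := hT.2 {s} hview s₁ (hS₁T hs₁) ⟨Sx, hSx, hdef⟩ Sx hSx hdef
  exact hnot (hSx hsx ▸ hcd)

theorem CAdmissible.profitable (hT : CAdmissible R S T) (hS₁ : ConfElim R S₁) (hS₁T : S₁ ⊆ T) :
    Profitable R S S₁ T := by
  refine ⟨hS₁T, ⟨hS₁, hT.1, Or.inl hT⟩, ?_⟩
  simp only [FewerAttackers, hT.undefAtt_eq_empty hS₁T, Set.ncard_empty, zero_le]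

theorem CAdmissible.exists_cPreferred_superset (hS : S.Finite) (hTS : T ⊆ S)
    (hT : CAdmissible R S T) : ∃ U, T ⊆ U ∧ U ⊆ S ∧ CPreferred R S U := by
  have hfin : {U | U ⊆ S ∧ CAdmissible R S U}.Finite := hS.finite_subsets.subset fun _ h => h.1
  obtain ⟨U, hTU, hU⟩ := hfin.exists_le_maximal ⟨hTS, hT⟩
  exact ⟨U, hTU, hU.prop.1, hU.prop.2,
    fun ⟨V, hUV, hVS, hV⟩ => hUV.not_ge (hU.le_of_ge ⟨hVS, hV⟩ hUV.le)⟩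

theorem coalitionPermitted_sdiff (hS₁T : S₁ ⊆ T) (hT : ConfElim R T) :
    CoalitionPermitted R S₁ (T \ S₁) :=
  ⟨Set.inter_sdiff_self S₁ T, by rwa [Set.union_sdiff_cancel hS₁T]⟩

end CoalitionArg

open CoalitionArg in
/-- Existence theorem. -/
theorem existence_theorem {A : Type*} (F : AF A)
    (S₁ : Set (Arg A)) (hS₁ : S₁ ⊆ F.args) :
    ∀ S₂ ⊆ F.args,
      CoalitionPermitted F.att S₁ S₂ →
      Profitable F.att F.args S₁ (S₁ ∪ S₂) →
      CAdmissible F.att F.args (S₁ ∪ S₂) →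
      ∃ S₃ ⊆ F.args,
        CoalitionPermitted F.att S₁ S₃ ∧
        Profitable F.att F.args S₁ (S₁ ∪ S₃) ∧
        CPreferred F.att F.args (S₁ ∪ S₃) ∧
        S₂ ⊆ S₃ := by
  intro S₂ hS₂ hCP hProf hAdm
  obtain ⟨U, hU, hUS, hUpref⟩ :=
    hAdm.exists_cPreferred_superset F.coherent.1 (Set.union_subset hS₁ hS₂)
  have hS₁U : S₁ ⊆ U := Set.subset_union_left.trans hU
  have hS₂U : S₂ ⊆ U := Set.subset_union_right.trans hU
  refine ⟨U \ S₁, Set.sdiff_subset.trans hUS, coalitionPermitted_sdiff hS₁U hUpref.1.1, ?_, ?_,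
    Set.subset_sdiff.2 ⟨hS₂U, (Set.disjoint_iff_inter_eq_empty.2 hCP.1).symm⟩⟩
  · rw [Set.union_sdiff_cancel hS₁U]
    exact hUpref.1.profitable hProf.2.1.1 hS₁U
  · rwa [Set.union_sdiff_cancel hS₁U]
end

section
/- Asymmetry of profitabilities: There exists an argumentation framework (S,R) and disjoint subsets S₁, S₂ of S such that S₁ ⊴ S₁ ∪ S₂ holds but S₂ ⊴ S₁ ∪ S₂ does not hold. -/
/-!
Take the arguments `a = (0, 1)`, `b = (1, 1)`, `c = (2, 1)`, where the only attacks are those of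
`b` on `a`. Nothing c-attacks `b`, so `{a}` is one-directionally attacked, the lowest state,
and joining `c` cannot leave `a` worse off: its single attacker `b` stays undefeated either way.
For `c` the coalition is a loss: `{c}` is unattacked, hence c-admissible, whereas `{a, c}` is not,
since no argument can c-defeat `b`.
-/

namespace CoalitionArg

section General

variable {A : Type*} {R : AttFun A} {S X Y : Set (Arg A)} {s b : Arg A}

theorem RDef.of_viewAtt {T : Set (Arg A)} (h : RDef (viewAtt R X) T s) : RDef R T s := by
  unfold RDef viewAtt at h
  split at h
  · simp at h
  · exact h

theorem not_cAttacks_of_forall_not_rDef (h : ∀ T, ¬ RDef R T s) : ¬ CAttacks R X s :=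
  fun ⟨_, T, _, hT⟩ => h T hT.of_viewAtt

theorem not_cDefeats_of_forall_not_rDef (h : ∀ T, ¬ RDef R T s) : ¬ CDefeats R X s :=
  fun hd => not_cAttacks_of_forall_not_rDef h hd.1

theorem confElim_of_forall_not_attacks (h : ∀ s ∈ X, ¬ Attacks R X s) : ConfElim R X :=
  fun s hs hd => h s hs hd.1

theorem cAdmissible_of_forall_not_rDef (hX : ConfElim R X)
    (h : ∀ s ∈ X, ∀ T, ¬ RDef R T s) : CAdmissible R S X :=
  ⟨hX, fun _ _ s hs ⟨T, _, hT⟩ => (h s hs T hT).elim⟩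

theorem not_oneDirAttacked_of_forall_not_rDef (h : ∀ s ∈ X, ∀ T, ¬ RDef R T s) :
    ¬ OneDirAttacked R S X :=
  fun ⟨_, _, _, ⟨s, hs, T, _, hT⟩, _⟩ => h s hs T hT

theorem not_cAdmissible_of_rDef_singleton (hb : b ∈ viewArgs R S X) (hs : s ∈ X)
    (hbs : RDef R {b} s) (hnd : ¬ CDefeats R X b) : ¬ CAdmissible R S X := by
  rintro ⟨-, h⟩
  obtain ⟨sx, rfl, hcd⟩ :=
    h {b} (Set.singleton_subset_iff.2 hb) s hs ⟨{b}, subset_rfl, hbs⟩ {b} subset_rfl hbs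
  exact hnd hcd

theorem oneDirAttacked_of_rDef_singleton (hX : ConfElim R X) (hb : b ∈ viewArgs R S X)
    (hs : s ∈ X) (hbs : RDef R {b} s) (hnc : ¬ CAttacks R X b) : OneDirAttacked R S X :=
  ⟨hX, {b}, Set.singleton_subset_iff.2 hb, ⟨s, hs, {b}, subset_rfl, hbs⟩, by
    rintro _ rfl
    exact hnc⟩

theorem stateLeq_of_oneDirAttacked (hX : OneDirAttacked R S X) (hY : ConfElim R Y) :
    StateLeq R S X Y :=
  ⟨hX.1, hY, Or.inr (Or.inl hX)⟩

theorem not_stateLeq_of_cAdmissible (hX : CAdmissible R S X) (hXo : ¬ OneDirAttacked R S X)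
    (hY : ¬ CAdmissible R S Y) : ¬ StateLeq R S X Y := by
  rintro ⟨-, -, hY' | hXo' | ⟨hX', -⟩⟩
  exacts [hY hY', hXo hXo', hX' hX]

/-- Unattacked attackers can never be c-defeated, so whether they count depends only on
membership. -/
theorem fewerAttackers_of_attackers_unattacked (hS : S.Finite) (hXY : X ⊆ Y)
    (h : ∀ s ∈ Attacker R S X, ∀ T, ¬ RDef R T s) : FewerAttackers R S X Y :=
  Set.ncard_le_ncard
    (fun s ⟨hs, _, hsY⟩ => ⟨hs, not_cDefeats_of_forall_not_rDef (h s hs), fun hsX => hsY (hXY hsX)⟩)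
    (hS.subset fun _ hs => hs.1.1)

end General

open Classical in
noncomputable def oneAttacksZero : AttFun ℕ := fun T s =>
  if T.Nonempty ∧ (∀ p ∈ T, p.1 = 1) ∧ s.1 = 0 then some 1 else none

theorem oneAttacksZero_eq_some {T : Set (Arg ℕ)} {s : Arg ℕ} {k : ℕ} :
    oneAttacksZero T s = some k ↔ (T.Nonempty ∧ (∀ p ∈ T, p.1 = 1) ∧ s.1 = 0) ∧ k = 1 := by
  unfold oneAttacksZero
  split_ifs with h
  · exact ⟨fun e => ⟨h, (Option.some.inj e).symm⟩, fun e => congrArg some e.2.symm⟩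
  · exact iff_of_false (by simp) fun e => h e.1

theorem rDef_oneAttacksZero {T : Set (Arg ℕ)} {s : Arg ℕ} :
    RDef oneAttacksZero T s ↔ T.Nonempty ∧ (∀ p ∈ T, p.1 = 1) ∧ s.1 = 0 := by
  unfold RDef oneAttacksZero
  split_ifs with h
  · exact iff_of_true rfl h
  · exact iff_of_false Bool.false_ne_true h

theorem isAttackStrength_oneAttacksZero : IsAttackStrength oneAttacksZero where
  empty_undef s := by simp [oneAttacksZero]
  subset_def T₁ T₂ s h hsub hne := by
    rw [rDef_oneAttacksZero] at h ⊢
    exact ⟨hne, fun p hp => h.2.1 p (hsub hp), h.2.2⟩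
  union_def T₁ T₂ s h₁ h₂ := by
    rw [rDef_oneAttacksZero] at h₁ h₂ ⊢
    exact ⟨h₁.1.mono Set.subset_union_left,
      fun p hp => hp.elim (h₁.2.1 p) (h₂.2.1 p), h₁.2.2⟩
  pos T s n h := by
    rw [(oneAttacksZero_eq_some.1 h).2]
    exact one_pos
  mono_source_cap T s a n m k h ha _ := by
    obtain ⟨⟨-, h1, h0⟩, rfl⟩ := oneAttacksZero_eq_some.1 h
    refine ⟨1, oneAttacksZero_eq_some.2 ⟨⟨⟨(a, m), Or.inr rfl⟩, ?_, h0⟩, rfl⟩, le_rfl⟩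
    rintro p (⟨hp, -⟩ | rfl)
    exacts [h1 p hp, h1 (a, n) ha]
  mono_source_inter T₁ T₂ s k₁ k₂ k h₁ h₂ h := by
    rw [(oneAttacksZero_eq_some.1 h₁).2, (oneAttacksZero_eq_some.1 h₂).2,
      (oneAttacksZero_eq_some.1 h).2]
    exact ⟨le_rfl, le_rfl⟩
  mono_target T a n m k h _ _ := by
    obtain ⟨⟨hne, h1, h0⟩, rfl⟩ := oneAttacksZero_eq_some.1 h
    exact ⟨1, oneAttacksZero_eq_some.2 ⟨⟨hne, h1, h0⟩, rfl⟩, le_rfl⟩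
  no_self T s hs := Option.not_isSome_iff_eq_none.1 fun h =>
    have ⟨_, h1, h0⟩ := rDef_oneAttacksZero.1 h
    one_ne_zero ((h1 s hs).symm.trans h0)

theorem not_rDef_oneAttacksZero {s : Arg ℕ} (hs : s.1 ≠ 0) (T : Set (Arg ℕ)) :
    ¬ RDef oneAttacksZero T s :=
  fun h => hs (rDef_oneAttacksZero.1 h).2.2

theorem confElim_oneAttacksZero {X : Set (Arg ℕ)} (hX : ∀ p ∈ X, p.1 ≠ 1) :
    ConfElim oneAttacksZero X :=
  confElim_of_forall_not_attacks <| by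
    rintro s - ⟨T, hT, h⟩
    obtain ⟨⟨p, hp⟩, h1, -⟩ := rDef_oneAttacksZero.1 h
    exact hX p (hT hp) (h1 p hp)

theorem fst_eq_one_of_mem_attacker {S X : Set (Arg ℕ)} {s : Arg ℕ}
    (hs : s ∈ Attacker oneAttacksZero S X) : s.1 = 1 := by
  obtain ⟨-, s₁, -, T, hT, h⟩ := hs
  obtain ⟨⟨p, hp⟩, h1, -⟩ := rDef_oneAttacksZero.1 h
  rw [← hT hp]
  exact h1 p hp

noncomputable def threeArgAF : AF ℕ where
  args := {(0, 1), (1, 1), (2, 1)}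
  att := oneAttacksZero
  coherent := by
    refine ⟨Set.toFinite _, ?_, ?_⟩
    · rintro p (rfl | rfl | rfl) <;> norm_num
    · rintro p (rfl | rfl | rfl) q (rfl | rfl | rfl) <;> simp
  isAtt := isAttackStrength_oneAttacksZero

theorem rDef_threeArgAF_b_a : RDef threeArgAF.att {(1, 1)} (0, 1) :=
  rDef_oneAttacksZero.2 ⟨Set.singleton_nonempty _, by rintro _ rfl; rfl, rfl⟩

theorem b_mem_viewArgs_threeArgAF {X : Set (Arg ℕ)} (hX : ∀ p ∈ X, p.1 ≠ 1) :
    (1, 1) ∈ viewArgs threeArgAF.att threeArgAF.args X :=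
  Or.inl ⟨by simp [threeArgAF], fun h => hX _ h rfl⟩

theorem profitable_threeArgAF_a :
    Profitable threeArgAF.att threeArgAF.args {(0, 1)} ({(0, 1)} ∪ {(2, 1)}) := by
  have ha : ∀ p ∈ ({(0, 1)} : Set (Arg ℕ)), p.1 ≠ 1 := by rintro _ rfl; decide
  have hac : ∀ p ∈ ({(0, 1)} ∪ {(2, 1)} : Set (Arg ℕ)), p.1 ≠ 1 := by
    rintro _ (rfl | rfl) <;> decide
  refine ⟨Set.subset_union_left, stateLeq_of_oneDirAttacked ?_ (confElim_oneAttacksZero hac),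
    fewerAttackers_of_attackers_unattacked threeArgAF.coherent.1 Set.subset_union_left
      fun s hs => not_rDef_oneAttacksZero (by simp [fst_eq_one_of_mem_attacker hs])⟩
  exact oneDirAttacked_of_rDef_singleton (confElim_oneAttacksZero ha)
    (b_mem_viewArgs_threeArgAF ha) rfl rDef_threeArgAF_b_a
    (not_cAttacks_of_forall_not_rDef (not_rDef_oneAttacksZero one_ne_zero))

theorem not_profitable_threeArgAF_c :
    ¬ Profitable threeArgAF.att threeArgAF.args {(2, 1)} ({(0, 1)} ∪ {(2, 1)}) := by
  have hc : ∀ s ∈ ({(2, 1)} : Set (Arg ℕ)), ∀ T, ¬ RDef threeArgAF.att T s := by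
    rintro _ rfl
    exact not_rDef_oneAttacksZero two_ne_zero
  have hac : ∀ p ∈ ({(0, 1)} ∪ {(2, 1)} : Set (Arg ℕ)), p.1 ≠ 1 := by
    rintro _ (rfl | rfl) <;> decide
  rintro ⟨-, h, -⟩
  refine not_stateLeq_of_cAdmissible ?_ (not_oneDirAttacked_of_forall_not_rDef hc) ?_ h
  · exact cAdmissible_of_forall_not_rDef (confElim_oneAttacksZero (by rintro _ rfl; decide)) hc
  · exact not_cAdmissible_of_rDef_singleton (b_mem_viewArgs_threeArgAF hac) (Or.inl rfl)
      rDef_threeArgAF_b_a (not_cDefeats_of_forall_not_rDef (not_rDef_oneAttacksZero one_ne_zero))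

end CoalitionArg

open CoalitionArg in
/-- Asymmetry of profitabilities. -/
theorem profitability_asymmetry :
    ∃ (A : Type) (F : AF A) (S₁ S₂ : Set (Arg A)),
      S₁ ⊆ F.args ∧ S₂ ⊆ F.args ∧ S₁ ∩ S₂ = ∅ ∧
      Profitable F.att F.args S₁ (S₁ ∪ S₂) ∧
      ¬ Profitable F.att F.args S₂ (S₁ ∪ S₂) :=
  ⟨ℕ, threeArgAF, {(0, 1)}, {(2, 1)}, by simp [threeArgAF], by simp [threeArgAF], by simp,
    profitable_threeArgAF_a, not_profitable_threeArgAF_c⟩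
end
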